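/- Let (X_p)_p, indexed by the primes, be independent random variables on a probability space (Ω, P), each distributed according to the probability Haar measure on SU₂(ℂ). For ν ≥ 0 let U_ν be the polynomial determined by U_ν(2cos θ) = sin((ν+1)θ)/sin θ, and for n ≥ 1 set Y_n = ∏_{p^ν ∥ n} U_ν(Tr X_p). For positive integers n, m let d = gcd(n,m), n' = n/d, m' = m/d. Then E(Y_n Y_m) = 0 unless both n' and m' are perfect squares. -/

import Mathlib

/-!
Write `Y_n Y_m = ∏_p f_p(X_p)` with `f_p = (U_a · U_b) ∘ Tr`, where `a`, `b` are the exponents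
of `p` in `n`, `m`. If `n'` or `m'` is not a square, then `a + b` is odd for some prime `p`.
Since `U_ν` has the parity of `ν` and `Tr(-x) = -Tr x`, that `f_p` is odd under left
multiplication by `-1 ∈ SU₂(ℂ)`, so its Haar integral vanishes, and by independence the factor
`E f_p(X_p) = 0` splits off the expectation.
-/

open MeasureTheory ProbabilityTheory Filter

noncomputable section

abbrev SU2 := Matrix.specialUnitaryGroup (Fin 2) ℂ

noncomputable instance : MeasurableSpace SU2 := borel SU2

instance : BorelSpace SU2 := ⟨rfl⟩

instance : Group SU2 :=
  { (inferInstance : Monoid SU2) with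
    inv := fun A => ⟨star (A : Matrix (Fin 2) (Fin 2) ℂ), by
      obtain ⟨h1, h2⟩ := Matrix.mem_specialUnitaryGroup_iff.mp A.2
      refine Matrix.mem_specialUnitaryGroup_iff.mpr ⟨Unitary.star_mem h1, ?_⟩
      show Matrix.det (star (A : Matrix (Fin 2) (Fin 2) ℂ)) = 1
      rw [Matrix.star_eq_conjTranspose, Matrix.det_conjTranspose, h2, star_one]⟩
    inv_mul_cancel := fun A => Subtype.ext (Unitary.star_mul_self_of_mem A.2.1) }

/-- Traces in `SU₂(ℂ)` are real, so nothing is lost by taking the real part. -/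
def rtr (x : SU2) : ℝ := (Matrix.trace (x : Matrix (Fin 2) (Fin 2) ℂ)).re

/-- The polynomial `U_ν` determined by `U_ν(2 cos θ) = sin((ν+1)θ)/sin θ`
(a rescaled Chebyshev polynomial of the second kind). -/
def chebU (ν : ℕ) (x : ℝ) : ℝ := (Polynomial.Chebyshev.U ℝ (ν : ℤ)).eval (x / 2)

/-- `Yn x n = ∏_{p^ν ∥ n} U_ν(Tr x_p)`, the product being over the prime powers
exactly dividing `n`. -/
def Yn (x : ℕ → SU2) (n : ℕ) : ℝ :=
  ∏ p ∈ n.primeFactors, chebU (n.factorization p) (rtr (x p))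

theorem Nat.isSquare_of_forall_even_factorization {n : ℕ} (h : ∀ p, Even (n.factorization p)) :
    IsSquare n := by
  rcases eq_or_ne n 0 with rfl | hn
  · exact ⟨0, rfl⟩
  refine ⟨n.factorization.prod fun p e => p ^ (e / 2), ?_⟩
  rw [← Finsupp.prod_mul]
  conv_lhs => rw [← Nat.prod_factorization_pow_eq_self hn]
  refine Finsupp.prod_congr fun p _ => ?_
  rw [← pow_add, ← two_mul, Nat.two_mul_div_two_of_even (h p)]

theorem Nat.isSquare_div_gcd_of_forall_even_factorization_add {n m : ℕ}
    (h : ∀ p, Even (n.factorization p + m.factorization p)) : IsSquare (n / n.gcd m) := by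
  rcases eq_or_ne n 0 with rfl | hn
  · exact ⟨0, by simp⟩
  rcases eq_or_ne m 0 with rfl | hm
  · exact ⟨1, by simp [Nat.div_self (Nat.pos_of_ne_zero hn)]⟩
  refine Nat.isSquare_of_forall_even_factorization fun p => ?_
  have hp := h p
  rw [Nat.factorization_div (Nat.gcd_dvd_left n m), Nat.factorization_gcd hn hm,
    Finsupp.tsub_apply, Finsupp.inf_apply]
  rcases le_total (n.factorization p) (m.factorization p) with hle | hle
  · simp [hle]
  · rw [inf_of_le_right hle]
    exact (Nat.even_sub hle).mpr (Nat.even_add.mp hp)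

theorem Nat.exists_prime_odd_factorization_add {n m : ℕ}
    (h : ¬(IsSquare (n / n.gcd m) ∧ IsSquare (m / n.gcd m))) :
    ∃ p, p.Prime ∧ Odd (n.factorization p + m.factorization p) := by
  by_contra! hall
  have heven : ∀ p, Even (n.factorization p + m.factorization p) := fun p => by
    by_cases hp : p.Prime
    · exact Nat.not_odd_iff_even.mp (hall p hp)
    · simp [Nat.factorization_eq_zero_of_not_prime _ hp]
  refine h ⟨Nat.isSquare_div_gcd_of_forall_even_factorization_add heven, ?_⟩
  rw [Nat.gcd_comm]
  exact Nat.isSquare_div_gcd_of_forall_even_factorization_add fun p => by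
    rw [add_comm]; exact heven p

theorem Nat.mem_primeFactors_union_of_odd_factorization_add {n m p : ℕ}
    (h : Odd (n.factorization p + m.factorization p)) : p ∈ n.primeFactors ∪ m.primeFactors := by
  simp only [Finset.mem_union, ← Nat.support_factorization, Finsupp.mem_support_iff]
  by_contra! hzero
  rw [hzero.1, hzero.2] at h
  exact Nat.not_odd_zero h

theorem integral_eq_zero_of_mul_left_eq_neg {G E : Type*} [Group G] [MeasurableSpace G]
    [MeasurableMul G] [NormedAddCommGroup E] [NormedSpace ℝ E] (μ : Measure G)
    [μ.IsMulLeftInvariant] {f : G → E} (g : G) (hf : ∀ x, f (g * x) = -f x) :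
    ∫ x, f x ∂μ = 0 := by
  have h := integral_mul_left_eq_self (μ := μ) f g
  simp_rw [hf, integral_neg] at h
  have htwice : (2 : ℝ) • ∫ x, f x ∂μ = 0 := by
    rw [two_smul]
    nth_rw 1 [← h]
    exact neg_add_cancel _
  exact (smul_eq_zero.mp htwice).resolve_left two_ne_zero

theorem ProbabilityTheory.iIndepFun.integral_finset_prod_eq_zero {Ω ι : Type*}
    [MeasurableSpace Ω] {P : Measure Ω} {f : ι → Ω → ℝ} (hf : iIndepFun f P)
    (hmeas : ∀ i, Measurable (f i)) {s : Finset ι} {i : ι} (hi : i ∈ s)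
    (hzero : ∫ ω, f i ω ∂P = 0) : ∫ ω, ∏ j ∈ s, f j ω ∂P = 0 := by
  classical
  have hindep : IndepFun (∏ j ∈ s.erase i, f j) (f i) P :=
    hf.indepFun_finsetProd_of_notMem hmeas (Finset.notMem_erase i s)
  have hprod : Measurable (∏ j ∈ s.erase i, f j) :=
    Finset.prod_fn (s.erase i) f ▸ Finset.measurable_prod _ fun j _ => hmeas j
  simp_rw [← Finset.prod_erase_mul s _ hi, ← Finset.prod_apply]
  rw [hindep.integral_fun_mul_eq_mul_integral hprod.aestronglyMeasurable
    (hmeas i).aestronglyMeasurable, hzero, mul_zero]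

theorem Matrix.neg_one_mem_specialUnitaryGroup {n α : Type*} [Fintype n] [DecidableEq n]
    [CommRing α] [StarRing α] (hn : Even (Fintype.card n)) :
    (-1 : Matrix n n α) ∈ Matrix.specialUnitaryGroup n α := by
  refine Matrix.mem_specialUnitaryGroup_iff.mpr ⟨?_, ?_⟩
  · rw [Unitary.mem_iff]; constructor <;> simp
  · rw [Matrix.det_neg, Matrix.det_one, mul_one, hn.neg_one_pow]

def negOneSU2 : SU2 := ⟨-1, Matrix.neg_one_mem_specialUnitaryGroup (by simp)⟩

theorem rtr_negOneSU2_mul (x : SU2) : rtr (negOneSU2 * x) = -rtr x := by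
  change (Matrix.trace (-1 * (x : Matrix (Fin 2) (Fin 2) ℂ))).re = _
  rw [neg_one_mul, Matrix.trace_neg, Complex.neg_re, rtr]

theorem continuous_rtr : Continuous rtr :=
  Complex.continuous_re.comp (Continuous.matrix_trace continuous_subtype_val)

theorem continuous_chebU (ν : ℕ) : Continuous (chebU ν) :=
  (Polynomial.continuous _).comp (continuous_id.div_const 2)

theorem chebU_zero (t : ℝ) : chebU 0 t = 1 := by
  simp [chebU]

theorem chebU_neg (ν : ℕ) (t : ℝ) : chebU ν (-t) = (-1) ^ ν * chebU ν t := by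
  simp [chebU, neg_div, Int.negOnePow]

theorem chebU_mul_chebU_neg_of_odd {a b : ℕ} (hab : Odd (a + b)) (t : ℝ) :
    chebU a (-t) * chebU b (-t) = -(chebU a t * chebU b t) := by
  rw [chebU_neg, chebU_neg, mul_mul_mul_comm, ← pow_add, hab.neg_one_pow, neg_one_mul]

theorem Yn_eq_prod_of_primeFactors_subset (x : ℕ → SU2) {n : ℕ} {s : Finset ℕ}
    (hs : n.primeFactors ⊆ s) : Yn x n = ∏ p ∈ s, chebU (n.factorization p) (rtr (x p)) :=
  Finset.prod_subset hs fun p _ hp => by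
    rw [Finsupp.notMem_support_iff.mp hp, chebU_zero]

theorem Yn_mul_Yn (x : ℕ → SU2) (n m : ℕ) :
    Yn x n * Yn x m = ∏ p ∈ n.primeFactors ∪ m.primeFactors,
      chebU (n.factorization p) (rtr (x p)) * chebU (m.factorization p) (rtr (x p)) := by
  rw [Yn_eq_prod_of_primeFactors_subset x Finset.subset_union_left,
    Yn_eq_prod_of_primeFactors_subset x Finset.subset_union_right, Finset.prod_mul_distrib]

theorem statement8_general
    {Ω : Type*} [MeasurableSpace Ω] (P : Measure Ω)
    (X : ℕ → Ω → SU2) (hXm : ∀ p, Measurable (X p))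
    (hindep : iIndepFun (fun p : Nat.Primes => X p) P)
    (μ : Measure SU2) (hHaar : μ.IsHaarMeasure)
    (hdist : ∀ p : ℕ, p.Prime → Measure.map (X p) P = μ)
    (n m : ℕ)
    (h : ¬(IsSquare (n / n.gcd m) ∧ IsSquare (m / n.gcd m))) :
    ∫ ω, Yn (fun p => X p ω) n * Yn (fun p => X p ω) m ∂P = 0 := by
  classical
  obtain ⟨p, hp, hodd⟩ := Nat.exists_prime_odd_factorization_add h
  let F (q : ℕ) (y : SU2) : ℝ :=
    chebU (n.factorization q) (rtr y) * chebU (m.factorization q) (rtr y)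
  have hF (q : ℕ) : Measurable (F q) :=
    (((continuous_chebU _).comp continuous_rtr).mul
      ((continuous_chebU _).comp continuous_rtr)).measurable
  have hFp : ∫ y, F p y ∂μ = 0 := integral_eq_zero_of_mul_left_eq_neg μ negOneSU2 fun y => by
    simp only [F, rtr_negOneSU2_mul, chebU_mul_chebU_neg_of_odd hodd]
  have hpT : (⟨p, hp⟩ : Nat.Primes) ∈ (n.primeFactors ∪ m.primeFactors).subtype Nat.Prime :=
    Finset.mem_subtype.mpr (Nat.mem_primeFactors_union_of_odd_factorization_add hodd)
  have hY (ω : Ω) : Yn (fun q => X q ω) n * Yn (fun q => X q ω) m =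
      ∏ q ∈ (n.primeFactors ∪ m.primeFactors).subtype Nat.Prime, F q (X q ω) := by
    rw [Yn_mul_Yn]
    refine (Finset.prod_subtype_of_mem (fun q => F q (X q ω)) fun q hq => ?_).symm
    rcases Finset.mem_union.mp hq with hq | hq <;> exact Nat.prime_of_mem_primeFactors hq
  simp_rw [hY]
  refine (hindep.comp (fun q => F q) fun q => hF q).integral_finset_prod_eq_zero
    (fun q => (hF q).comp (hXm q)) hpT ?_
  rw [← hFp, ← hdist p hp, integral_map (hXm p).aemeasurable (hF p).aestronglyMeasurable]
  rfl

/-- With `d = gcd(n,m)`, `n´ = n/d`, `m´ = m/d`, one has `E(Y_n Y_m) = 0` unless both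
`n´` and `m´` are perfect squares. -/
theorem statement8
    {Ω : Type*} [MeasurableSpace Ω] (P : Measure Ω) [IsProbabilityMeasure P]
    (X : ℕ → Ω → SU2) (hXm : ∀ p, Measurable (X p))
    (hindep : iIndepFun (fun p : Nat.Primes => X p) P)
    (μ : Measure SU2) (hHaar : μ.IsHaarMeasure) (hμprob : IsProbabilityMeasure μ)
    (hdist : ∀ p : ℕ, p.Prime → Measure.map (X p) P = μ)
    (n m : ℕ) (hn : 0 < n) (hm : 0 < m)
    (h : ¬(IsSquare (n / n.gcd m) ∧ IsSquare (m / n.gcd m))) :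
    ∫ ω, Yn (fun p => X p ω) n * Yn (fun p => X p ω) m ∂P = 0 :=
  statement8_general P X hXm hindep μ hHaar hdist n m h
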